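/- Let c(n) = ⌊n·φ²/2⌋ and λ = (5 − √5)/4. For every positive integer n: if {nφ} < λ then φ³·{c(2n+1)·φ} − φ·{nφ} = φ², and if {nφ} > λ then φ³·{c(2n+1)·φ} − φ·{nφ} = 1. -/

import Mathlib

/-!
Write `f = {nφ}` and `k = ⌊nφ⌋`. Since `φ² = φ + 1`, `(2n+1)φ²/2 = n + nφ + φ²/2`, so
`c(2n+1) = n + k + j` with `j = ⌊f + φ²/2⌋`, which is `1` or `2` according as `f < λ` or `f > λ`,
because `λ = 2 - φ²/2`. Multiplying `kφ = nφ² - fφ` out gives `(n + k)φ ≡ f(2 - φ) = f/φ² (mod 1)`,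
so `{c(2n+1)φ} = f/φ² + {jφ}`, and the identities follow from `φ³{φ} = φ²` and `φ³{2φ} = 1`.
-/

noncomputable def φ : ℝ := (1 + Real.sqrt 5) / 2
noncomputable def c (n : ℕ) : ℤ := ⌊(n : ℝ) * φ ^ 2 / 2⌋

lemma φ_sq : φ ^ 2 = φ + 1 := Real.goldenRatio_sq

lemma one_lt_φ : 1 < φ := Real.one_lt_goldenRatio

lemma φ_lt_two : φ < 2 := Real.goldenRatio_lt_two

lemma five_sub_sqrt_five_div_four : (5 - Real.sqrt 5) / 4 = 2 - φ ^ 2 / 2 := by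
  rw [φ_sq, φ]
  ring

lemma c_two_mul_add_one (n : ℕ) :
    c (2 * n + 1) = n + ⌊(n : ℝ) * φ⌋ + ⌊Int.fract ((n : ℝ) * φ) + φ ^ 2 / 2⌋ := by
  have h : ((2 * n + 1 : ℕ) : ℝ) * φ ^ 2 / 2
      = ((n + ⌊(n : ℝ) * φ⌋ : ℤ) : ℝ) + (Int.fract ((n : ℝ) * φ) + φ ^ 2 / 2) := by
    push_cast
    linear_combination (n : ℝ) * φ_sq + (Int.floor_add_fract ((n : ℝ) * φ)).symm
  rw [c, h, Int.floor_intCast_add]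

lemma floor_add_φ_sq_div_two_of_lt {x : ℝ} (hx₀ : 0 ≤ x) (hx : x < 2 - φ ^ 2 / 2) :
    ⌊x + φ ^ 2 / 2⌋ = 1 := by
  rw [Int.floor_eq_iff]
  push_cast
  constructor <;> linarith [one_lt_φ, φ_sq]

lemma floor_add_φ_sq_div_two_of_gt {x : ℝ} (hx : 2 - φ ^ 2 / 2 < x) (hx₁ : x < 1) :
    ⌊x + φ ^ 2 / 2⌋ = 2 := by
  rw [Int.floor_eq_iff]
  push_cast
  constructor <;> linarith [φ_lt_two, φ_sq]

lemma add_floor_mul_φ_mul_φ (m : ℤ) :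
    ((m + ⌊(m : ℝ) * φ⌋ : ℤ) : ℝ) * φ
      = ((m + 2 * ⌊(m : ℝ) * φ⌋ : ℤ) : ℝ) + Int.fract ((m : ℝ) * φ) * (2 - φ) := by
  have h := Int.floor_add_fract ((m : ℝ) * φ)
  push_cast
  linear_combination (m : ℝ) * φ_sq + (φ - 2) * h

lemma fract_add_floor_add_one_mul_φ (m : ℤ) :
    Int.fract (((m + ⌊(m : ℝ) * φ⌋ + 1 : ℤ) : ℝ) * φ)
      = Int.fract ((m : ℝ) * φ) * (2 - φ) + (φ - 1) := by
  have hf₀ := Int.fract_nonneg ((m : ℝ) * φ)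
  have hf₁ := Int.fract_lt_one ((m : ℝ) * φ)
  rw [Int.fract_eq_iff]
  refine ⟨by nlinarith [φ_lt_two, one_lt_φ], by nlinarith [φ_lt_two, one_lt_φ],
    m + 2 * ⌊(m : ℝ) * φ⌋ + 1, ?_⟩
  rw [Int.cast_add _ 1, add_mul, add_floor_mul_φ_mul_φ]
  push_cast
  ring

lemma fract_add_floor_add_two_mul_φ (m : ℤ) :
    Int.fract (((m + ⌊(m : ℝ) * φ⌋ + 2 : ℤ) : ℝ) * φ)
      = Int.fract ((m : ℝ) * φ) * (2 - φ) + (2 * φ - 3) := by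
  have hf₀ := Int.fract_nonneg ((m : ℝ) * φ)
  have hf₁ := Int.fract_lt_one ((m : ℝ) * φ)
  have h3 : 3 / 2 < φ := by nlinarith [φ_sq, one_lt_φ]
  rw [Int.fract_eq_iff]
  refine ⟨by nlinarith [φ_lt_two], by nlinarith [φ_lt_two, one_lt_φ],
    m + 2 * ⌊(m : ℝ) * φ⌋ + 3, ?_⟩
  rw [Int.cast_add _ 2, add_mul, add_floor_mul_φ_mul_φ]
  push_cast
  ring

theorem fract_c_odd_identity_general (n : ℕ) :
    (Int.fract ((n : ℝ) * φ) < (5 - Real.sqrt 5) / 4 →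
      φ ^ 3 * Int.fract ((c (2 * n + 1) : ℝ) * φ) - φ * Int.fract ((n : ℝ) * φ) = φ ^ 2) ∧
    (Int.fract ((n : ℝ) * φ) > (5 - Real.sqrt 5) / 4 →
      φ ^ 3 * Int.fract ((c (2 * n + 1) : ℝ) * φ) - φ * Int.fract ((n : ℝ) * φ) = 1) := by
  have hcast : ((n : ℤ) : ℝ) = n := Int.cast_natCast n
  rw [five_sub_sqrt_five_div_four, c_two_mul_add_one]
  set f := Int.fract ((n : ℝ) * φ)
  constructor
  · intro hlt
    rw [floor_add_φ_sq_div_two_of_lt (Int.fract_nonneg _) hlt, ← hcast,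
      fract_add_floor_add_one_mul_φ, hcast]
    linear_combination ((1 - f) * φ ^ 2 + f * φ) * φ_sq
  · intro hgt
    rw [floor_add_φ_sq_div_two_of_gt hgt (Int.fract_lt_one _), ← hcast,
      fract_add_floor_add_two_mul_φ, hcast]
    linear_combination ((2 - f) * φ ^ 2 + (f - 1) * φ + 1) * φ_sq

theorem fract_c_odd_identity (n : ℕ) (hn : 0 < n) :
    (Int.fract ((n : ℝ) * φ) < (5 - Real.sqrt 5) / 4 →
      φ ^ 3 * Int.fract ((c (2 * n + 1) : ℝ) * φ) - φ * Int.fract ((n : ℝ) * φ) = φ ^ 2) ∧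
    (Int.fract ((n : ℝ) * φ) > (5 - Real.sqrt 5) / 4 →
      φ ^ 3 * Int.fract ((c (2 * n + 1) : ℝ) * φ) - φ * Int.fract ((n : ℝ) * φ) = 1) :=
  fract_c_odd_identity_general n
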